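/- Let Ω ⊆ ℝⁿ be an open set, let E be an open ball whose closure is contained in Ω, and let Λ > 0. There exists a constant C > 0, depending only on E, n and Λ, such that for every Lebesgue-measurable function u : ℝⁿ → ℝⁿ, every δ > 0, and every ξ ∈ ℝⁿ with |ξ| ≤ Λ and E + δξ ⊆ Ω, one has ∫_E |arctan(u(x+δξ)·ξ) − arctan(u(x)·ξ)| dx ≤ C δ (1 + F_{δ,ξ}(u, E)). -/

import Mathlib

/-!
Pointwise, `|arctan a - arctan b| ≤ δ + 4 arctan ((a - b)² / δ)`: when `(a - b)² ≤ δ`, arctan is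
1-Lipschitz, `arctan t ≥ t / 2` on `[0, 1]` and AM-GM gives `|a - b| ≤ δ/2 + (a - b)²/(2δ)`;
otherwise the right side already exceeds `π`. Integrating over `E`, the points with
`x + δξ ∈ E` contribute `4 δ F_{δ,ξ}(u, E)`, and the remaining crescent `E \ (E - δξ)` of a ball
has measure `O(δ |ξ|)`, on which the arctan term is bounded by `π / 2`.
-/

open MeasureTheory

/-- The (real-valued) directional functional `F_{ε,ξ}(u,E)`:
`F_{ε,ξ}(u,E) = (1/ε) ∫_{E ∩ (E - εξ)} arctan(((u(x+εξ) - u(x))·ξ)²/ε) dx`. -/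
noncomputable def dirFR (n : ℕ) (ε : ℝ) (ξ : EuclideanSpace ℝ (Fin n))
    (u : EuclideanSpace ℝ (Fin n) → EuclideanSpace ℝ (Fin n))
    (E : Set (EuclideanSpace ℝ (Fin n))) : ℝ :=
  (1 / ε) *
    ∫ x in E ∩ ((fun y => y - ε • ξ) '' E),
      Real.arctan ((inner ℝ (u (x + ε • ξ) - u x) ξ : ℝ) ^ 2 / ε)

open Metric Real Module

namespace Real

lemma half_le_arctan {s : ℝ} (h0 : 0 ≤ s) (h1 : s ≤ 1) : s / 2 ≤ arctan s := by
  have hsqrt : √(1 + s ^ 2) ≤ 2 := sqrt_le_iff.2 ⟨by norm_num, by nlinarith⟩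
  calc s / 2 ≤ s / √(1 + s ^ 2) := div_le_div_of_nonneg_left h0 (by positivity) hsqrt
    _ = sin (arctan s) := (sin_arctan s).symm
    _ ≤ arctan s := sin_le (arctan_nonneg.2 h0)

lemma lipschitzWith_arctan : LipschitzWith 1 arctan := by
  refine lipschitzWith_of_nnnorm_deriv_le differentiable_arctan fun x => ?_
  rw [deriv_arctan, ← NNReal.coe_le_coe, coe_nnnorm, NNReal.coe_one, norm_div, norm_one,
    norm_of_nonneg (by positivity)]
  exact div_le_one_of_le₀ (by nlinarith) (by positivity)

lemma abs_arctan_sub_arctan_le (a b : ℝ) : |arctan a - arctan b| ≤ |a - b| := by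
  simpa [dist_eq] using lipschitzWith_arctan.dist_le_mul a b

lemma abs_arctan_sub_arctan_lt_pi (a b : ℝ) : |arctan a - arctan b| < π := by
  obtain ⟨ha₁, ha₂⟩ := arctan_mem_Ioo a
  obtain ⟨hb₁, hb₂⟩ := arctan_mem_Ioo b
  rw [abs_lt]
  constructor <;> linarith

lemma abs_arctan_sub_arctan_le_add_arctan {a b δ : ℝ} (hδ : 0 < δ) :
    |arctan a - arctan b| ≤ δ + 4 * arctan ((a - b) ^ 2 / δ) := by
  rcases le_or_gt ((a - b) ^ 2) δ with hsmall | hlarge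
  · have hamgm : |a - b| ≤ δ / 2 + (a - b) ^ 2 / δ / 2 := by
      rw [div_div, div_add_div _ _ (by norm_num) (by positivity), le_div_iff₀ (by positivity)]
      nlinarith [sq_nonneg (|a - b| - δ), sq_abs (a - b)]
    have hhalf := half_le_arctan (by positivity) ((div_le_one hδ).2 hsmall)
    have hnonneg : 0 ≤ arctan ((a - b) ^ 2 / δ) := arctan_nonneg.2 (by positivity)
    linarith [abs_arctan_sub_arctan_le a b]
  · have hquarter : π / 4 ≤ arctan ((a - b) ^ 2 / δ) := by
      rw [← arctan_one, arctan_le_arctan_iff, le_div_iff₀ hδ]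
      linarith
    linarith [abs_arctan_sub_arctan_lt_pi a b]

end Real

lemma image_sub_const_ball {E : Type*} [SeminormedAddCommGroup E] (x v : E) (r : ℝ) :
    (· - v) '' ball x r = ball (x - v) r := by
  ext z
  rw [mem_ball, ← dist_add_right _ _ v, sub_add_cancel]
  exact ⟨fun ⟨y, hy, hyz⟩ => hyz ▸ by simpa using hy, fun h => ⟨z + v, h, add_sub_cancel_right z v⟩⟩

section AddHaar

variable {E : Type*} [NormedAddCommGroup E] [NormedSpace ℝ E] [MeasurableSpace E] [BorelSpace E]
  [FiniteDimensional ℝ E] (μ : Measure E) [μ.IsAddHaarMeasure]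

lemma addHaar_real_ball_sdiff_ball_le [Nontrivial E] (x : E) {r s : ℝ} (hs : 0 ≤ s)
    (hsr : s ≤ r) :
    μ.real (ball x r \ ball x (r - s)) ≤
      finrank ℝ E * r ^ (finrank ℝ E - 1) * s * μ.real (ball 0 1) := by
  have hball : ∀ ρ, 0 ≤ ρ → μ.real (ball x ρ) = ρ ^ finrank ℝ E * μ.real (ball 0 1) :=
    fun ρ hρ => by
      rw [measureReal_def, Measure.addHaar_ball μ x hρ, ENNReal.toReal_mul,
        ENNReal.toReal_ofReal (by positivity), measureReal_def]
  have hpow : r ^ finrank ℝ E - (r - s) ^ finrank ℝ E ≤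
      finrank ℝ E * r ^ (finrank ℝ E - 1) * s := by
    refine (le_abs_self _).trans ((abs_pow_sub_pow_le _ _ _).trans_eq ?_)
    rw [sub_sub_cancel, abs_of_nonneg hs, abs_of_nonneg (hs.trans hsr),
      abs_of_nonneg (sub_nonneg.2 hsr), max_eq_left (by linarith)]
    ring
  rw [measureReal_sdiff (ball_subset_ball (by linarith)) measurableSet_ball,
    hball r (hs.trans hsr), hball (r - s) (sub_nonneg.2 hsr), ← sub_mul]
  exact mul_le_mul_of_nonneg_right hpow measureReal_nonneg

lemma addHaar_real_ball_sdiff_ball_sub_le (x v : E) {r : ℝ} (hr : 0 < r) :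
    μ.real (ball x r \ ball (x - v) r) ≤
      finrank ℝ E * r ^ (finrank ℝ E - 1) * ‖v‖ * μ.real (ball 0 1) := by
  rcases subsingleton_or_nontrivial E with _ | _
  · simp [Subsingleton.elim v 0]
  have hsub : ball x (r - min ‖v‖ r) ⊆ ball (x - v) r := fun y hy => by
    rw [mem_ball] at hy ⊢
    have hv : ‖v‖ < r := by
      by_contra! h
      linarith [min_eq_right h, dist_nonneg (x := y) (y := x)]
    calc dist y (x - v) ≤ dist y x + ‖v‖ := by
          simpa [dist_eq_norm, sub_sub_eq_add_sub, add_sub_right_comm] using norm_add_le (y - x) v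
      _ < r := by linarith [min_eq_left hv.le]
  calc μ.real (ball x r \ ball (x - v) r) ≤ μ.real (ball x r \ ball x (r - min ‖v‖ r)) :=
        measureReal_mono (Set.sdiff_subset_sdiff_right hsub)
          (measure_ne_top_of_subset Set.sdiff_subset measure_ball_lt_top.ne)
    _ ≤ finrank ℝ E * r ^ (finrank ℝ E - 1) * min ‖v‖ r * μ.real (ball 0 1) :=
        addHaar_real_ball_sdiff_ball_le μ x (le_min (norm_nonneg v) hr.le) (min_le_right _ _)
    _ ≤ finrank ℝ E * r ^ (finrank ℝ E - 1) * ‖v‖ * μ.real (ball 0 1) := by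
        gcongr
        exact min_le_left _ _

end AddHaar

section DirFR

variable {n : ℕ}

lemma dirFR_nonneg {ε : ℝ} (hε : 0 ≤ ε) (ξ : EuclideanSpace ℝ (Fin n))
    (u : EuclideanSpace ℝ (Fin n) → EuclideanSpace ℝ (Fin n))
    (E : Set (EuclideanSpace ℝ (Fin n))) : 0 ≤ dirFR n ε ξ u E :=
  mul_nonneg (by positivity) (integral_nonneg fun _ => arctan_nonneg.2 (by positivity))

lemma integral_abs_arctan_inner_sub_le {u : EuclideanSpace ℝ (Fin n) → EuclideanSpace ℝ (Fin n)}
    (hu : Measurable u) {δ : ℝ} (hδ : 0 < δ) (ξ : EuclideanSpace ℝ (Fin n))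
    {E : Set (EuclideanSpace ℝ (Fin n))} (hE : MeasurableSet E) (hE_fin : volume E ≠ ⊤) :
    ∫ x in E, |arctan (inner ℝ (u (x + δ • ξ)) ξ) - arctan (inner ℝ (u x) ξ)| ≤
      δ * volume.real E + 4 * (δ * dirFR n δ ξ u E) +
        2 * π * volume.real (E \ (fun y => y - δ • ξ) '' E) := by
  set S := (fun y => y - δ • ξ) '' E
  set g := fun x => arctan (inner ℝ (u (x + δ • ξ) - u x) ξ ^ 2 / δ)
  have hS : MeasurableSet S := (MeasurableEquiv.subRight (δ • ξ)).measurableSet_image.2 hE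
  have hg_nonneg : ∀ x, 0 ≤ g x := fun x => arctan_nonneg.2 (by positivity)
  have hg_le : ∀ x, g x ≤ π / 2 := fun x => (arctan_lt_pi_div_two _).le
  have : IsFiniteMeasure (volume.restrict E) := isFiniteMeasure_restrict.2 hE_fin
  have hg_int : IntegrableOn g E := by
    refine Integrable.of_bound (C := π / 2) ?_ (.of_forall fun x => ?_)
    · exact (((hu.comp (measurable_add_const _)).sub hu).inner measurable_const).pow_const 2
        |>.div_const δ |>.arctan |>.aestronglyMeasurable
    · rw [norm_of_nonneg (hg_nonneg x)]
      exact hg_le x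
  have hF : δ * dirFR n δ ξ u E = ∫ x in E ∩ S, g x := by
    rw [dirFR, ← mul_assoc, mul_one_div_cancel hδ.ne', one_mul]
  have hgS : ∫ x in E \ S, g x ≤ π / 2 * volume.real (E \ S) :=
    (le_abs_self _).trans (norm_setIntegral_le_of_norm_le_const
      (measure_lt_top_of_subset Set.sdiff_subset hE_fin) fun x _ => by
        rw [norm_of_nonneg (hg_nonneg x)]; exact hg_le x)
  calc ∫ x in E, |arctan (inner ℝ (u (x + δ • ξ)) ξ) - arctan (inner ℝ (u x) ξ)|
      ≤ ∫ x in E, (δ + 4 * g x) := by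
        refine integral_mono_of_nonneg (.of_forall fun _ => abs_nonneg _)
          ((integrable_const δ).add (hg_int.const_mul 4)) (.of_forall fun x => ?_)
        simpa only [g, inner_sub_left] using abs_arctan_sub_arctan_le_add_arctan hδ
    _ = δ * volume.real E + 4 * ((∫ x in E ∩ S, g x) + ∫ x in E \ S, g x) := by
        rw [integral_add (integrable_const δ) (hg_int.const_mul 4), setIntegral_const,
          integral_const_mul, integral_inter_add_sdiff hS hg_int, smul_eq_mul, mul_comm]
    _ ≤ δ * volume.real E + 4 * (δ * dirFR n δ ξ u E) + 2 * π * volume.real (E \ S) := by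
        rw [hF]
        linarith

end DirFR

theorem stmt5_general (n : ℕ) (Ω : Set (EuclideanSpace ℝ (Fin n)))
    (x₀ : EuclideanSpace ℝ (Fin n)) (r : ℝ) (hr : 0 < r)
    (Λ : ℝ) (hΛ : 0 < Λ) :
    ∃ C : ℝ, 0 < C ∧
      ∀ u : EuclideanSpace ℝ (Fin n) → EuclideanSpace ℝ (Fin n), Measurable u →
      ∀ δ : ℝ, 0 < δ → ∀ ξ : EuclideanSpace ℝ (Fin n), ‖ξ‖ ≤ Λ →
        (fun y => y + δ • ξ) '' Metric.ball x₀ r ⊆ Ω →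
        (∫ x in Metric.ball x₀ r,
            |Real.arctan (inner ℝ (u (x + δ • ξ)) ξ : ℝ) -
              Real.arctan (inner ℝ (u x) ξ : ℝ)|)
          ≤ C * δ * (1 + dirFR n δ ξ u (Metric.ball x₀ r)) := by
  set V := volume.real (ball x₀ r)
  set K := n * r ^ (n - 1) * volume.real (ball (0 : EuclideanSpace ℝ (Fin n)) 1)
  have hK : 0 ≤ K := by positivity
  refine ⟨V + 4 + 2 * π * K * Λ, by positivity, fun u hu δ hδ ξ hξ _ => ?_⟩
  have hδξ : ‖δ • ξ‖ ≤ δ * Λ := by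
    rw [norm_smul, norm_of_nonneg hδ.le]
    exact mul_le_mul_of_nonneg_left hξ hδ.le
  have hvol : volume.real (ball x₀ r \ (fun y => y - δ • ξ) '' ball x₀ r) ≤ K * (δ * Λ) := by
    rw [image_sub_const_ball]
    refine (addHaar_real_ball_sdiff_ball_sub_le volume x₀ (δ • ξ) hr).trans ?_
    simpa only [finrank_euclideanSpace_fin, K, mul_right_comm _ ‖δ • ξ‖] using
      mul_le_mul_of_nonneg_left hδξ hK
  have hF := dirFR_nonneg hδ.le ξ u (ball x₀ r)
  calc _ ≤ δ * V + 4 * (δ * dirFR n δ ξ u (ball x₀ r)) +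
        2 * π * volume.real (ball x₀ r \ (fun y => y - δ • ξ) '' ball x₀ r) :=
        integral_abs_arctan_inner_sub_le hu hδ ξ measurableSet_ball measure_ball_lt_top.ne
    _ ≤ δ * V + 4 * (δ * dirFR n δ ξ u (ball x₀ r)) + 2 * π * (K * (δ * Λ)) := by gcongr
    _ ≤ (V + 4 + 2 * π * K * Λ) * δ * (1 + dirFR n δ ξ u (ball x₀ r)) := by
        have hc : 0 ≤ V + 2 * π * K * Λ := add_nonneg measureReal_nonneg (by positivity)
        nlinarith [mul_nonneg hc (mul_nonneg hδ.le hF)]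

/-- Lemma 4.4 (Gobbino's Lemma 5.1), for a ball `E` with closure contained in `Ω` and
directions `ξ` confined to `{|ξ| ≤ Λ}`: there is `C > 0`, depending only on `E`, `n`, `Λ`,
such that for every measurable `u`, `δ > 0` and `ξ` with `|ξ| ≤ Λ` and `E + δξ ⊆ Ω`,
`∫_E |arctan(u(x+δξ)·ξ) - arctan(u(x)·ξ)| dx ≤ Cδ(1 + F_{δ,ξ}(u,E))`. -/
theorem stmt5 (n : ℕ) (Ω : Set (EuclideanSpace ℝ (Fin n))) (hΩ : IsOpen Ω)
    (x₀ : EuclideanSpace ℝ (Fin n)) (r : ℝ) (hr : 0 < r)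
    (hcl : closure (Metric.ball x₀ r) ⊆ Ω) (Λ : ℝ) (hΛ : 0 < Λ) :
    ∃ C : ℝ, 0 < C ∧
      ∀ u : EuclideanSpace ℝ (Fin n) → EuclideanSpace ℝ (Fin n), Measurable u →
      ∀ δ : ℝ, 0 < δ → ∀ ξ : EuclideanSpace ℝ (Fin n), ‖ξ‖ ≤ Λ →
        (fun y => y + δ • ξ) '' Metric.ball x₀ r ⊆ Ω →
        (∫ x in Metric.ball x₀ r,
            |Real.arctan (inner ℝ (u (x + δ • ξ)) ξ : ℝ) -
              Real.arctan (inner ℝ (u x) ξ : ℝ)|)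
          ≤ C * δ * (1 + dirFR n δ ξ u (Metric.ball x₀ r)) :=
  stmt5_general n Ω x₀ r hr Λ hΛ
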